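/- arXiv:2210.08329 — 3 statements merged into one kernel-verified Lean document; each statement's English description precedes it below -/
import Mathlib

section
/- Let L be a natural number and let d, τ, γ, T be positive real numbers, and for each l ∈ {0,…,L} let A_l > 0 and C_l > 0. Define D = T · (γ · ∑_{l'=0}^{L} C_{l'}^{τ/(τ+d)} · A_{l'}^{d/(τ+d)})^{-1} and n_l* = D · (A_l / C_l)^{d/(τ+d)} for each l. Then the vector (n_0*, …, n_L*) satisfies the budget constraint γ · ∑_{l=0}^{L} C_l · n_l* = T, and for every vector (n_0, …, n_L) of positive reals satisfying γ · ∑_{l=0}^{L} C_l · n_l = T one has ∑_{l=0}^{L} A_l · (n_l*)^{-τ/d} ≤ ∑_{l=0}^{L} A_l · n_l^{-τ/d}; that is, (n_0*, …, n_L*) minimizes the objective ∑_{l=0}^{L} A_l n_l^{-τ/d} over all positive real vectors satisfying the budget constraint. -/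
open Finset

/-- Tangent line inequality for `rpow` with nonpositive exponent. -/
lemma rpow_tangent_neg {p t : ℝ} (ht : 0 < t) (hp : p ≤ 0) :
    1 + p * (t - 1) ≤ t ^ p := by
  have h1 : t ^ p = Real.exp (Real.log t * p) := Real.rpow_def_of_pos ht p
  have h2 : Real.log t * p + 1 ≤ Real.exp (Real.log t * p) := Real.add_one_le_exp _
  have h3 : Real.log t ≤ t - 1 := Real.log_le_sub_one_of_pos ht
  have h4 : (t - 1) * p ≤ Real.log t * p := mul_le_mul_of_nonpos_right h3 hp
  nlinarith

/-- Tangent line inequality at `x` for `y ↦ y ^ p`, `p ≤ 0`. -/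
lemma rpow_tangent_neg' {p x y : ℝ} (hx : 0 < x) (hy : 0 < y) (hp : p ≤ 0) :
    x ^ p + p * x ^ (p - 1) * (y - x) ≤ y ^ p := by
  have h := rpow_tangent_neg (t := y / x) (div_pos hy hx) hp
  have hxp : 0 < x ^ p := Real.rpow_pos_of_pos hx p
  have hmul := mul_le_mul_of_nonneg_right h hxp.le
  have hdiv : (y / x) ^ p * x ^ p = y ^ p := by
    rw [Real.div_rpow hy.le hx.le]
    field_simp
  have hx1 : x ^ (p - 1) = x ^ p / x := by
    rw [Real.rpow_sub hx, Real.rpow_one]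
  calc x ^ p + p * x ^ (p - 1) * (y - x)
      = (1 + p * (y / x - 1)) * x ^ p := by
        rw [hx1]; field_simp
    _ ≤ (y / x) ^ p * x ^ p := hmul
    _ = y ^ p := hdiv

/-- Theorem 2 of the paper: the optimal sample sizes for multilevel Bayesian
quadrature under a cost constraint. -/
theorem mlbq_optimal_sample_sizes
    (L : ℕ) (d τ γ T : ℝ) (hd : 0 < d) (hτ : 0 < τ) (hγ : 0 < γ) (hT : 0 < T)
    (A C : Fin (L + 1) → ℝ) (hA : ∀ l, 0 < A l) (hC : ∀ l, 0 < C l)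
    (D : ℝ)
    (hD : D = T * (γ * ∑ l, C l ^ (τ / (τ + d)) * A l ^ (d / (τ + d)))⁻¹)
    (nstar : Fin (L + 1) → ℝ)
    (hnstar : ∀ l, nstar l = D * (A l / C l) ^ (d / (τ + d))) :
    γ * ∑ l, C l * nstar l = T ∧
    ∀ n : Fin (L + 1) → ℝ, (∀ l, 0 < n l) → γ * ∑ l, C l * n l = T →
      ∑ l, A l * nstar l ^ (-(τ / d)) ≤ ∑ l, A l * n l ^ (-(τ / d)) := by
  have htd : 0 < τ + d := by linarith
  set q : ℝ := d / (τ + d) with hq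
  set p : ℝ := -(τ / d) with hp
  have hppos : p < 0 := by
    have : (0:ℝ) < τ / d := div_pos hτ hd
    rw [hp]; linarith
  set S : ℝ := ∑ l, C l ^ (τ / (τ + d)) * A l ^ q with hS
  have hSpos : 0 < S := by
    apply Finset.sum_pos
    · intro l _
      exact mul_pos (Real.rpow_pos_of_pos (hC l) _) (Real.rpow_pos_of_pos (hA l) _)
    · exact Finset.univ_nonempty
  have hDpos : 0 < D := by
    rw [hD]
    exact mul_pos hT (inv_pos.mpr (mul_pos hγ hSpos))
  have hnpos : ∀ l, 0 < nstar l := by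
    intro l
    rw [hnstar l]
    have := hA l; have := hC l
    positivity
  -- key1 : C l * nstar l = D * (C l ^ (τ/(τ+d)) * A l ^ q)
  have key1 : ∀ l, C l * nstar l = D * (C l ^ (τ / (τ + d)) * A l ^ q) := by
    intro l
    rw [hnstar l, Real.div_rpow (hA l).le (hC l).le]
    have hCq : 0 < C l ^ q := Real.rpow_pos_of_pos (hC l) q
    have hsplit : C l ^ (τ / (τ + d)) * C l ^ q = C l := by
      rw [← Real.rpow_add (hC l)]
      have : τ / (τ + d) + q = 1 := by
        rw [hq]; field_simp
      rw [this, Real.rpow_one]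
    calc C l * (D * (A l ^ q / C l ^ q))
        = (C l ^ (τ / (τ + d)) * C l ^ q) * (D * (A l ^ q / C l ^ q)) := by rw [hsplit]
      _ = D * (C l ^ (τ / (τ + d)) * A l ^ q) := by
          field_simp
  have hbudget : γ * ∑ l, C l * nstar l = T := by
    have : ∑ l, C l * nstar l = D * S := by
      rw [hS, Finset.mul_sum]
      exact Finset.sum_congr rfl fun l _ => key1 l
    rw [this, hD]
    field_simp
  refine ⟨hbudget, ?_⟩
  intro n hn hbn
  -- key2 : A l * nstar l ^ (p - 1) = D ^ (p - 1) * C l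
  have key2 : ∀ l, A l * nstar l ^ (p - 1) = D ^ (p - 1) * C l := by
    intro l
    rw [hnstar l]
    have hAC : 0 < A l / C l := div_pos (hA l) (hC l)
    rw [Real.mul_rpow hDpos.le (Real.rpow_nonneg hAC.le q), ← Real.rpow_mul hAC.le]
    have hexp : q * (p - 1) = -1 := by
      rw [hq, hp]
      field_simp
      ring
    rw [hexp, Real.rpow_neg_one]
    have hA' := (hA l).ne'
    have hC' := (hC l).ne'
    field_simp
  -- pointwise tangent bound
  have key3 : ∀ l, A l * nstar l ^ p ≤
      A l * n l ^ p - p * D ^ (p - 1) * (C l * n l - C l * nstar l) := by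
    intro l
    have h := rpow_tangent_neg' (hnpos l) (hn l) hppos.le
    have h2 := mul_le_mul_of_nonneg_left h (hA l).le
    have h3 : A l * (nstar l ^ p + p * nstar l ^ (p - 1) * (n l - nstar l))
        = A l * nstar l ^ p + p * D ^ (p - 1) * (C l * n l - C l * nstar l) := by
      linear_combination p * (n l - nstar l) * key2 l
    linarith [h2, h3.symm.le]
  have hsum := Finset.sum_le_sum (fun l (_ : l ∈ Finset.univ) => key3 l)
  have heq : ∑ l, C l * n l = ∑ l, C l * nstar l := by
    have h1 : γ * ∑ l, C l * n l = γ * ∑ l, C l * nstar l := by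
      rw [hbn, hbudget]
    exact mul_left_cancel₀ (ne_of_gt hγ) h1
  have hsum2 : ∑ l, (A l * n l ^ p - p * D ^ (p - 1) * (C l * n l - C l * nstar l))
      = ∑ l, A l * n l ^ p := by
    rw [Finset.sum_sub_distrib, ← Finset.mul_sum, Finset.sum_sub_distrib, heq,
      sub_self, mul_zero, sub_zero]
  rw [hsum2] at hsum
  exact hsum
end

section
/- Let γ > 0 and let a < b be real numbers. Then for every ω ∈ [a, b], ∫_a^b (1 + √5·|ω − ω'|/γ + 5·(ω − ω')²/(3γ²)) · exp(−√5·|ω − ω'|/γ) · (b − a)^{-1} dω' = (b − a)^{-1} · (16√5·γ − exp(√5(a − ω)/γ)·(√5·(8γ² + 5(a − ω)²)/γ + 25(ω − a)) + exp(√5(ω − b)/γ)·(−√5·(8γ² + 5(b − ω)²)/γ + 25(ω − b))) / 15. -/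
/-!
Writing `c = √5 / γ`, the kernel is `p(c |ω - ω'|)` for the profile
`p(r) = (1 + c r + c² r² / 3) e^{-c r}`, which has the elementary primitive
`-(8 / (3c) + 5 r / 3 + c r² / 3) e^{-c r}`. Splitting `[a, b]` at `ω` reduces the kernel mean
to two integrals of the profile over `[0, ω - a]` and `[0, b - ω]`.
-/

open Real

noncomputable def maternFiveHalfProfile (c r : ℝ) : ℝ :=
  (1 + c * r + c ^ 2 * r ^ 2 / 3) * exp (-(c * r))

theorem hasDerivAt_maternFiveHalfProfile_antideriv {c : ℝ} (hc : c ≠ 0) (r : ℝ) :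
    HasDerivAt (fun r ↦ -(8 / (3 * c) + 5 / 3 * r + c / 3 * r ^ 2) * exp (-(c * r)))
      (maternFiveHalfProfile c r) r := by
  have hpoly : HasDerivAt (fun r : ℝ ↦ -(8 / (3 * c) + 5 / 3 * r + c / 3 * r ^ 2))
      (-(5 / 3 + c / 3 * (2 * r))) r := by
    refine ((((hasDerivAt_id' r).const_mul (5 / 3)).const_add (8 / (3 * c))).add
      ((hasDerivAt_pow 2 r).const_mul (c / 3))).neg.congr_deriv ?_
    norm_num
  have hexp : HasDerivAt (fun r ↦ exp (-(c * r))) (exp (-(c * r)) * -c) r :=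
    (((hasDerivAt_id r).const_mul c).neg.congr_deriv (by simp)).exp
  refine (hpoly.mul hexp).congr_deriv ?_
  unfold maternFiveHalfProfile
  field_simp
  ring

theorem integral_maternFiveHalfProfile {c : ℝ} (hc : c ≠ 0) (t : ℝ) :
    ∫ r in 0..t, maternFiveHalfProfile c r =
      8 / (3 * c) - (8 / (3 * c) + 5 / 3 * t + c / 3 * t ^ 2) * exp (-(c * t)) := by
  rw [intervalIntegral.integral_eq_sub_of_hasDerivAt
    (fun r _ ↦ hasDerivAt_maternFiveHalfProfile_antideriv hc r)
    ((by unfold maternFiveHalfProfile; fun_prop : Continuous _).intervalIntegrable 0 t)]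
  simp only [mul_zero, add_zero, ne_eq, OfNat.ofNat_ne_zero, not_false_eq_true, zero_pow,
    neg_zero, exp_zero, mul_one]
  ring

theorem intervalIntegral_comp_abs_sub {E : Type*} [NormedAddCommGroup E] [NormedSpace ℝ E]
    {f : ℝ → E} (hf : Continuous f) {a b ω : ℝ} (haω : a ≤ ω) (hωb : ω ≤ b) :
    ∫ x in a..b, f |ω - x| = (∫ r in 0..ω - a, f r) + ∫ r in 0..b - ω, f r := by
  have hint : Continuous fun x ↦ f |ω - x| := by fun_prop
  rw [← intervalIntegral.integral_add_adjacent_intervals (hint.intervalIntegrable a ω)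
    (hint.intervalIntegrable ω b)]
  have hleft : ∫ x in a..ω, f |ω - x| = ∫ x in a..ω, f (ω - x) :=
    intervalIntegral.integral_congr fun x hx ↦ by
      rw [Set.uIcc_of_le haω] at hx
      simp only [abs_of_nonneg (sub_nonneg.2 hx.2)]
  have hright : ∫ x in ω..b, f |ω - x| = ∫ x in ω..b, f (x - ω) :=
    intervalIntegral.integral_congr fun x hx ↦ by
      rw [Set.uIcc_of_le hωb] at hx
      simp only [abs_sub_comm ω x, abs_of_nonneg (sub_nonneg.2 hx.1)]
  rw [hleft, hright, intervalIntegral.integral_comp_sub_left,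
    intervalIntegral.integral_comp_sub_right, sub_self]

theorem maternFiveHalf_eq_maternFiveHalfProfile (γ r : ℝ) :
    (1 + √5 * r / γ + 5 * r ^ 2 / (3 * γ ^ 2)) * exp (-√5 * r / γ) =
      maternFiveHalfProfile (√5 / γ) r := by
  have h5 : √5 ^ 2 = 5 := sq_sqrt (by norm_num)
  rw [maternFiveHalfProfile, show -√5 * r / γ = -(√5 / γ * r) by ring, div_pow, h5]
  ring

theorem matern_five_half_kernel_mean_general
    (γ a b : ℝ) (hγ : 0 < γ) :
    ∀ ω ∈ Set.Icc a b,
      (∫ ω' in a..b,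
        (1 + Real.sqrt 5 * |ω - ω'| / γ + 5 * (ω - ω') ^ 2 / (3 * γ ^ 2)) *
          Real.exp (-(Real.sqrt 5) * |ω - ω'| / γ) * (b - a)⁻¹)
      = (b - a)⁻¹ *
          (16 * Real.sqrt 5 * γ -
            Real.exp (Real.sqrt 5 * (a - ω) / γ) *
              (Real.sqrt 5 * (8 * γ ^ 2 + 5 * (a - ω) ^ 2) / γ + 25 * (ω - a)) +
            Real.exp (Real.sqrt 5 * (ω - b) / γ) *
              (-(Real.sqrt 5) * (8 * γ ^ 2 + 5 * (b - ω) ^ 2) / γ + 25 * (ω - b)))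
          / 15 := by
  rintro ω ⟨haω, hωb⟩
  have hc : √5 / γ ≠ 0 := by positivity
  have h5 : √5 ^ 2 = 5 := sq_sqrt (by norm_num)
  simp_rw [← sq_abs (ω - _), maternFiveHalf_eq_maternFiveHalfProfile]
  rw [intervalIntegral.integral_mul_const,
    intervalIntegral_comp_abs_sub (by unfold maternFiveHalfProfile; fun_prop) haω hωb,
    integral_maternFiveHalfProfile hc, integral_maternFiveHalfProfile hc,
    show √5 * (a - ω) / γ = -(√5 / γ * (ω - a)) by ring,
    show √5 * (ω - b) / γ = -(√5 / γ * (b - ω)) by ring]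
  generalize exp (-(√5 / γ * (ω - a))) = Ea, exp (-(√5 / γ * (b - ω))) = Eb
  field_simp
  linear_combination 24 * γ ^ 2 * (b - a)⁻¹ * (Ea + Eb - 2) * h5

/-- Kernel mean of the Matérn-5/2 kernel with respect to the uniform
distribution on `[a, b]`. -/
theorem matern_five_half_kernel_mean
    (γ a b : ℝ) (hγ : 0 < γ) (hab : a < b) :
    ∀ ω ∈ Set.Icc a b,
      (∫ ω' in a..b,
        (1 + Real.sqrt 5 * |ω - ω'| / γ + 5 * (ω - ω') ^ 2 / (3 * γ ^ 2)) *
          Real.exp (-(Real.sqrt 5) * |ω - ω'| / γ) * (b - a)⁻¹)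
      = (b - a)⁻¹ *
          (16 * Real.sqrt 5 * γ -
            Real.exp (Real.sqrt 5 * (a - ω) / γ) *
              (Real.sqrt 5 * (8 * γ ^ 2 + 5 * (a - ω) ^ 2) / γ + 25 * (ω - a)) +
            Real.exp (Real.sqrt 5 * (ω - b) / γ) *
              (-(Real.sqrt 5) * (8 * γ ^ 2 + 5 * (b - ω) ^ 2) / γ + 25 * (ω - b)))
          / 15 :=
  matern_five_half_kernel_mean_general γ a b hγ
end

section
/- Let γ > 0 and let a < b be real numbers. Then ∫_a^b ∫_a^b (1 + √5·|ω − ω'|/γ + 5·(ω − ω')²/(3γ²)) · exp(−√5·|ω − ω'|/γ) · (b − a)^{-2} dω' dω = 2·(b − a)^{-2} · (8√5·(b − a)·γ − 15γ² + exp(−√5(b − a)/γ)·(5(b − a)² + 7√5·(b − a)·γ + 15γ²)) / 15. -/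
/-!
The integrand depends on `ω, ω'` only through `|ω - ω'|`. For a continuous profile `φ`, splitting
the inner integral at `ω` and reflecting gives
`∫_a^b ∫_a^b φ |ω - ω'| = 2 ∫_0^{b-a} ∫_0^x φ`. With `s = √5 / γ` the Matérn-5/2 profile is
`(1 + s r + s² r² / 3) e^{-s r}`, whose first and second primitives are again polynomials times
`e^{-s r}`, so the right-hand side is evaluated by the fundamental theorem of calculus.
-/

open Real intervalIntegral

section StationaryKernel

variable {φ : ℝ → ℝ}

theorem integral_comp_abs_sub (hφ : Continuous φ) {a b ω : ℝ} (haω : a ≤ ω) (hωb : ω ≤ b) :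
    ∫ ω' in a..b, φ |ω - ω'| = (∫ u in 0..ω - a, φ u) + ∫ u in 0..b - ω, φ u := by
  have hint : ∀ c d : ℝ, IntervalIntegrable (fun ω' => φ |ω - ω'|) MeasureTheory.volume c d :=
    fun c d => (hφ.comp (continuous_const.sub continuous_id).abs).intervalIntegrable c d
  rw [← integral_add_adjacent_intervals (hint a ω) (hint ω b)]
  have hleft : ∫ ω' in a..ω, φ |ω - ω'| = ∫ ω' in a..ω, φ (ω - ω') :=
    integral_congr fun x hx => by
      rw [Set.uIcc_of_le haω] at hx
      simp only [abs_of_nonneg (sub_nonneg.2 hx.2)]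
  have hright : ∫ ω' in ω..b, φ |ω - ω'| = ∫ ω' in ω..b, φ (ω' - ω) :=
    integral_congr fun x hx => by
      rw [Set.uIcc_of_le hωb] at hx
      simp only [abs_sub_comm ω x, abs_of_nonneg (sub_nonneg.2 hx.1)]
  rw [hleft, hright, integral_comp_sub_left, integral_comp_sub_right, sub_self]

theorem integral_integral_comp_abs_sub (hφ : Continuous φ) {a b : ℝ} (hab : a ≤ b) :
    ∫ ω in a..b, ∫ ω' in a..b, φ |ω - ω'| = 2 * ∫ x in 0..b - a, ∫ u in 0..x, φ u := by
  set Φ : ℝ → ℝ := fun x => ∫ u in 0..x, φ u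
  have hΦ : Continuous Φ := continuous_primitive (fun c d => hφ.intervalIntegrable c d) 0
  have hinner : ∀ ω ∈ Set.uIcc a b, ∫ ω' in a..b, φ |ω - ω'| = Φ (ω - a) + Φ (b - ω) := by
    intro ω hω
    rw [Set.uIcc_of_le hab] at hω
    exact integral_comp_abs_sub hφ hω.1 hω.2
  have hleft : IntervalIntegrable (fun ω => Φ (ω - a)) MeasureTheory.volume a b :=
    (hΦ.comp (continuous_sub_right a)).intervalIntegrable a b
  have hright : IntervalIntegrable (fun ω => Φ (b - ω)) MeasureTheory.volume a b :=
    (hΦ.comp (continuous_sub_left b)).intervalIntegrable a b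
  rw [integral_congr hinner, integral_add hleft hright, integral_comp_sub_right Φ,
    integral_comp_sub_left Φ, sub_self, sub_self, two_mul]

end StationaryKernel

theorem hasDerivAt_mul_exp_neg_mul {p : ℝ → ℝ} {p' t : ℝ} (hp : HasDerivAt p p' t) (s : ℝ) :
    HasDerivAt (fun t => p t * exp (-(s * t))) ((p' - s * p t) * exp (-(s * t))) t := by
  have hexp : HasDerivAt (fun t => exp (-(s * t))) (exp (-(s * t)) * -s) t :=
    (((hasDerivAt_id t).const_mul s).neg.congr_deriv (by ring)).exp
  exact (hp.mul hexp).congr_deriv (by ring)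

namespace Matern52

/-- `kernel (√5 / γ) r` is `c_{5/2}(ω, ω')` at distance `r = |ω - ω'|`. -/
noncomputable def kernel (s r : ℝ) : ℝ :=
  (1 + s * r + s ^ 2 * r ^ 2 / 3) * exp (-(s * r))

noncomputable def primitive (s t : ℝ) : ℝ :=
  8 / (3 * s) - (8 / (3 * s) + 5 * t / 3 + s * t ^ 2 / 3) * exp (-(s * t))

noncomputable def secondPrimitive (s t : ℝ) : ℝ :=
  8 * t / (3 * s) + (5 / s ^ 2 + 7 * t / (3 * s) + t ^ 2 / 3) * exp (-(s * t))

variable {s : ℝ}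

theorem continuous_kernel (s : ℝ) : Continuous (kernel s) := by
  unfold kernel
  fun_prop

theorem hasDerivAt_primitive (hs : s ≠ 0) (t : ℝ) : HasDerivAt (primitive s) (kernel s t) t := by
  have hp : HasDerivAt (fun t => 8 / (3 * s) + 5 * t / 3 + s * t ^ 2 / 3)
      (5 / 3 + 2 * s * t / 3) t :=
    ((((hasDerivAt_id t).const_mul 5).div_const 3).const_add _ |>.add
      (((hasDerivAt_pow 2 t).const_mul s).div_const 3)).congr_deriv (by ring)
  refine ((hasDerivAt_const t _).sub (hasDerivAt_mul_exp_neg_mul hp s)).congr_deriv ?_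
  unfold kernel
  field_simp
  ring

theorem hasDerivAt_secondPrimitive (hs : s ≠ 0) (t : ℝ) :
    HasDerivAt (secondPrimitive s) (primitive s t) t := by
  have hp : HasDerivAt (fun t => 5 / s ^ 2 + 7 * t / (3 * s) + t ^ 2 / 3)
      (7 / (3 * s) + 2 * t / 3) t :=
    ((((hasDerivAt_id t).const_mul 7).div_const (3 * s)).const_add _ |>.add
      ((hasDerivAt_pow 2 t).div_const 3)).congr_deriv (by ring)
  have hlin : HasDerivAt (fun t => 8 * t / (3 * s)) (8 / (3 * s)) t :=
    (((hasDerivAt_id t).const_mul 8).div_const (3 * s)).congr_deriv (by ring)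
  refine (hlin.add (hasDerivAt_mul_exp_neg_mul hp s)).congr_deriv ?_
  unfold primitive
  field_simp
  ring

theorem integral_integral_kernel (hs : s ≠ 0) (L : ℝ) :
    ∫ x in 0..L, ∫ u in 0..x, kernel s u = secondPrimitive s L - secondPrimitive s 0 := by
  have hinner : ∀ x : ℝ, ∫ u in 0..x, kernel s u = primitive s x := fun x => by
    rw [integral_eq_sub_of_hasDerivAt (fun u _ => hasDerivAt_primitive hs u)
      ((continuous_kernel s).intervalIntegrable _ _)]
    simp [primitive]
  simp_rw [hinner]
  exact integral_eq_sub_of_hasDerivAt (fun u _ => hasDerivAt_secondPrimitive hs u)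
    (Differentiable.continuous (fun t => (hasDerivAt_primitive hs t).differentiableAt)
      |>.intervalIntegrable _ _)

end Matern52

/-- Initial error of the Matérn-5/2 kernel with respect to the uniform
distribution on `[a, b]`. -/
theorem matern_five_half_initial_error
    (γ a b : ℝ) (hγ : 0 < γ) (hab : a < b) :
    (∫ ω in a..b, ∫ ω' in a..b,
        (1 + Real.sqrt 5 * |ω - ω'| / γ + 5 * (ω - ω') ^ 2 / (3 * γ ^ 2)) *
          Real.exp (-(Real.sqrt 5) * |ω - ω'| / γ) * ((b - a) ^ 2)⁻¹)
      = 2 * ((b - a) ^ 2)⁻¹ *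
          (8 * Real.sqrt 5 * (b - a) * γ - 15 * γ ^ 2 +
            Real.exp (-(Real.sqrt 5) * (b - a) / γ) *
              (5 * (b - a) ^ 2 + 7 * Real.sqrt 5 * (b - a) * γ + 15 * γ ^ 2))
          / 15 := by
  have h5 : √5 ^ 2 = 5 := sq_sqrt (by norm_num)
  have hs : √5 / γ ≠ 0 := by positivity
  have hexp : ∀ r : ℝ, -√5 * r / γ = -(√5 / γ * r) := fun r => by ring
  have hkernel : ∀ ω ω' : ℝ,
      (1 + √5 * |ω - ω'| / γ + 5 * (ω - ω') ^ 2 / (3 * γ ^ 2)) * exp (-√5 * |ω - ω'| / γ) =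
        Matern52.kernel (√5 / γ) |ω - ω'| := fun ω ω' => by
    rw [Matern52.kernel, hexp, div_pow, h5, ← sq_abs (ω - ω')]
    field_simp
  simp_rw [hkernel, integral_mul_const]
  rw [integral_integral_comp_abs_sub (Matern52.continuous_kernel _) hab.le,
    Matern52.integral_integral_kernel hs, Matern52.secondPrimitive, Matern52.secondPrimitive, hexp]
  field_simp
  simp only [mul_zero, zero_div, neg_zero, exp_zero, h5]
  ring
end
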